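/- arXiv:0902.2649 — 2 statements merged into one kernel-verified Lean document; each statement's English description precedes it below -/
import Mathlib

section
/- Let 𝒜 be a straight-line program with n variables generating a string A of length N, and let 1 ≤ x ≤ N. Then A can be written as a concatenation A = s_1 s_2 ⋯ s_m of nonempty substrings such that m ≤ (2n + 1)(N/x + 1), each s_i has length at most 2x, and each s_i equals eval(X) for some variable X of 𝒜. -/
/-- A straight-line program (SLP) over alphabet `α` with variables `X_1, …, X_n`
(indexed here by `Fin n`): each variable is either a terminal rule `X_i → a`
or a concatenation rule `X_i → X_j X_k` with `j, k < i`. -/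
structure SLP (α : Type*) (n : ℕ) where
  rule : Fin n → α ⊕ (Fin n × Fin n)
  wf : ∀ i j k, rule i = Sum.inr (j, k) → j < i ∧ k < i

/-- The string generated by variable `X_i`. -/
def SLP.eval {α : Type*} {n : ℕ} (P : SLP α n) (i : Fin n) : List α :=
  match h : P.rule i with
  | Sum.inl a => [a]
  | Sum.inr (j, k) => P.eval j ++ P.eval k
termination_by i.val
decreasing_by
  · exact (P.wf i j k h).1
  · exact (P.wf i j k h).2

lemma SLP.eval_inl {α : Type*} {n : ℕ} (P : SLP α n) {i : Fin n} {a : α}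
    (h : P.rule i = Sum.inl a) : P.eval i = [a] := by
  rw [SLP.eval.eq_def]
  split <;> simp_all

lemma SLP.eval_inr {α : Type*} {n : ℕ} (P : SLP α n) {i j k : Fin n}
    (h : P.rule i = Sum.inr (j, k)) : P.eval i = P.eval j ++ P.eval k := by
  rw [SLP.eval.eq_def]
  split <;> simp_all

lemma SLP.eval_ne_nil {α : Type*} {n : ℕ} (P : SLP α n) (i : Fin n) :
    P.eval i ≠ [] := by
  rw [SLP.eval.eq_def]
  split
  · simp
  · next j k h =>
    have := SLP.eval_ne_nil P j
    simp_all
termination_by i.val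
decreasing_by
  rename_i h
  exact (P.wf _ _ _ h).1

/-- Recursive decomposition of `eval i` into pieces of length at most `2x`. -/
def SLP.decomp {α : Type*} {n : ℕ} (P : SLP α n) (x : ℕ) (i : Fin n) : List (List α) :=
  if (P.eval i).length ≤ 2 * x then [P.eval i]
  else match h : P.rule i with
    | Sum.inl _ => [P.eval i]
    | Sum.inr (j, k) => P.decomp x j ++ P.decomp x k
termination_by i.val
decreasing_by
  · exact (P.wf i j k h).1
  · exact (P.wf i j k h).2

lemma SLP.decomp_flatten {α : Type*} {n : ℕ} (P : SLP α n) (x : ℕ) (i : Fin n) :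
    (P.decomp x i).flatten = P.eval i := by
  rw [SLP.decomp]
  split
  · simp
  · split
    · simp
    · next j k h =>
      rw [List.flatten_append, SLP.decomp_flatten P x j, SLP.decomp_flatten P x k,
        SLP.eval_inr P h]
termination_by i.val
decreasing_by
  all_goals
    rename_i h
    first
    | exact (P.wf _ _ _ h).1
    | exact (P.wf _ _ _ h).2

lemma SLP.decomp_mem {α : Type*} {n : ℕ} (P : SLP α n) {x : ℕ} (hx : 1 ≤ x) (i : Fin n) :
    ∀ s ∈ P.decomp x i, s ≠ [] ∧ s.length ≤ 2 * x ∧ ∃ i' : Fin n, s = P.eval i' := by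
  rw [SLP.decomp]
  split
  · next hlen =>
    intro s hs
    simp only [List.mem_singleton] at hs
    subst hs
    exact ⟨P.eval_ne_nil i, hlen, i, rfl⟩
  · split
    · next a h =>
      intro s hs
      simp only [List.mem_singleton] at hs
      subst hs
      refine ⟨P.eval_ne_nil i, ?_, i, rfl⟩
      rw [SLP.eval_inl P h]
      simpa using by omega
    · next j k h =>
      intro s hs
      rw [List.mem_append] at hs
      rcases hs with hs | hs
      · exact SLP.decomp_mem P hx j s hs
      · exact SLP.decomp_mem P hx k s hs
termination_by i.val
decreasing_by
  all_goals
    rename_i h _ _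
    first
    | exact (P.wf _ _ _ h).1
    | exact (P.wf _ _ _ h).2

lemma SLP.decomp_count {α : Type*} {n : ℕ} (P : SLP α n) {x : ℕ} (hx : 1 ≤ x) (i : Fin n) :
    x * (P.decomp x i).length ≤ x + i.val * (P.eval i).length := by
  rw [SLP.decomp]
  split
  · simp
  · next hlen =>
    split
    · simp
    · next j k h =>
      have hj := (P.wf i j k h).1
      have hk := (P.wf i j k h).2
      have IHj := SLP.decomp_count P hx j
      have IHk := SLP.decomp_count P hx k
      have he : (P.eval i).length = (P.eval j).length + (P.eval k).length := by
        rw [SLP.eval_inr P h]; simp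
      rw [he] at hlen ⊢
      set a := (P.eval j).length
      set b := (P.eval k).length
      have hj' : j.val + 1 ≤ i.val := hj
      have hk' : k.val + 1 ≤ i.val := hk
      have hab : x ≤ a + b := by omega
      have h1 : (j.val + 1) * a ≤ i.val * a := Nat.mul_le_mul_right a hj'
      have h2 : (k.val + 1) * b ≤ i.val * b := Nat.mul_le_mul_right b hk'
      simp only [List.length_append]
      nlinarith [IHj, IHk]
termination_by i.val
decreasing_by
  all_goals
    rename_i h
    first
    | exact (P.wf _ _ _ h).1
    | exact (P.wf _ _ _ h).2

/-- Let `𝒜` be an SLP with `n` variables generating a string `A` of length `N`, and let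
`1 ≤ x ≤ N`.  Then `A` is a concatenation `A = s₁ s₂ ⋯ s_m` of nonempty substrings with
`m ≤ (2n + 1)(N/x + 1)`, each `sᵢ` of length at most `2x` and each `sᵢ` generated by
some variable of `𝒜`. -/
theorem slp_partition {α : Type*} {n : ℕ} (P : SLP α n) (hn : 0 < n)
    (A : List α) (hA : A = P.eval ⟨n - 1, by omega⟩)
    (N : ℕ) (hN : N = A.length) (x : ℕ) (hx1 : 1 ≤ x) (hxN : x ≤ N) :
    ∃ ss : List (List α),
      ss.flatten = A ∧
      (∀ s ∈ ss, s ≠ [] ∧ s.length ≤ 2 * x ∧ ∃ i : Fin n, s = P.eval i) ∧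
      (ss.length : ℝ) ≤ (2 * n + 1) * ((N : ℝ) / (x : ℝ) + 1) := by
  set i : Fin n := ⟨n - 1, by omega⟩ with hi
  refine ⟨P.decomp x i, by rw [SLP.decomp_flatten, hA], P.decomp_mem hx1 i, ?_⟩
  have hcount := P.decomp_count hx1 i
  have hlen : (P.eval i).length = N := by rw [← hA, ← hN]
  rw [hlen] at hcount
  have hnat : x * (P.decomp x i).length ≤ (2 * n + 1) * (N + x) := by
    have : i.val * N ≤ 2 * n * N := by
      have : i.val ≤ 2 * n := by omega
      exact Nat.mul_le_mul_right N this
    nlinarith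
  have hx0 : (0 : ℝ) < (x : ℝ) := by exact_mod_cast hx1
  have key : ((2 : ℝ) * n + 1) * ((N : ℝ) / x + 1) = ((2 * n + 1) * (N + x) : ℕ) / (x : ℝ) := by
    push_cast
    field_simp
  rw [key, le_div_iff₀ hx0]
  calc ((P.decomp x i).length : ℝ) * x = ((x * (P.decomp x i).length : ℕ) : ℝ) := by
        push_cast; ring
    _ ≤ (((2 * n + 1) * (N + x) : ℕ) : ℝ) := by exact_mod_cast hnat
end

section
/- Let G' be a block of an alignment grid with a nonnegative scoring function, and let DIST be its DIST table. For all input indices i ≤ i' and output indices j ≤ j' such that DIST[i,j'] and DIST[i',j] are both finite, DIST[i,j] and DIST[i',j'] are finite and DIST[i,j] + DIST[i',j'] ≤ DIST[i,j'] + DIST[i',j]. -/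
/-- A nonnegative scoring function. -/
structure Scoring (α : Type*) where
  del : α → ℝ
  ins : α → ℝ
  sub : α → α → ℝ
  del_nonneg : ∀ a, 0 ≤ del a
  ins_nonneg : ∀ b, 0 ≤ ins b
  sub_nonneg : ∀ a b, 0 ≤ sub a b

/-- `GPath S A B r c r' c' p q w` holds iff there is a directed path of total weight `w`,
staying inside the sub-rectangle (block) `[r,r'] × [c,c']` of the alignment grid of
`A` and `B`, from vertex `p` to vertex `q`. -/
inductive GPath {α : Type*} (S : Scoring α) (A B : List α) (r c r' c' : ℕ) :
    ℕ × ℕ → ℕ × ℕ → ℝ → Prop where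
  | refl (i j : ℕ) (hi : r ≤ i ∧ i ≤ r') (hj : c ≤ j ∧ j ≤ c') :
      GPath S A B r c r' c' (i, j) (i, j) 0
  | del {p : ℕ × ℕ} {i j : ℕ} {w : ℝ} (h : GPath S A B r c r' c' p (i, j) w)
      (hi : i < r') (hA : i < A.length) :
      GPath S A B r c r' c' p (i + 1, j) (w + S.del (A.get ⟨i, hA⟩))
  | ins {p : ℕ × ℕ} {i j : ℕ} {w : ℝ} (h : GPath S A B r c r' c' p (i, j) w)
      (hj : j < c') (hB : j < B.length) :
      GPath S A B r c r' c' p (i, j + 1) (w + S.ins (B.get ⟨j, hB⟩))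
  | subst {p : ℕ × ℕ} {i j : ℕ} {w : ℝ} (h : GPath S A B r c r' c' p (i, j) w)
      (hi : i < r') (hj : j < c') (hA : i < A.length) (hB : j < B.length) :
      GPath S A B r c r' c' p (i + 1, j + 1) (w + S.sub (A.get ⟨i, hA⟩) (B.get ⟨j, hB⟩))

/-- The minimum weight of a directed path from `p` to `q` inside the block
`[r,r'] × [c,c']`; `+∞` (`⊤`) when no such path exists. -/
noncomputable def minWeight {α : Type*} (S : Scoring α) (A B : List α)
    (r c r' c' : ℕ) (p q : ℕ × ℕ) : EReal :=
  sInf ((fun w : ℝ => (w : EReal)) '' {w : ℝ | GPath S A B r c r' c' p q w})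

/-- The `k`-th input vertex of the block `[r,r'] × [c,c']` (first column and first row,
ordered from the bottom-left corner to the top-right corner). -/
def inputVtx (r c r' c' : ℕ) (k : ℕ) : ℕ × ℕ :=
  if k ≤ r' - r then (r' - k, c) else (r, c + (k - (r' - r)))

/-- The `k`-th output vertex of the block `[r,r'] × [c,c']` (last row and last column,
ordered from the bottom-left corner to the top-right corner). -/
def outputVtx (r c r' c' : ℕ) (k : ℕ) : ℕ × ℕ :=
  if k ≤ c' - c then (r', c + k) else (r' - (k - (c' - c)), c')

/-- The `DIST` table of the block `[r,r'] × [c,c']` of the alignment grid of `A` and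
`B`: `DIST[i,j]` is the minimum weight of a directed path inside the block from the
`i`-th input vertex to the `j`-th output vertex, and `∞` if no such path exists. -/
noncomputable def DISTfun {α : Type*} (S : Scoring α) (A B : List α)
    (r c r' c' : ℕ) (i j : ℕ) : EReal :=
  minWeight S A B r c r' c' (inputVtx r c r' c' i) (outputVtx r c r' c' j)

section Aux

variable {α : Type*} {S : Scoring α} {A B : List α} {r c r' c' : ℕ}

lemma gpath_weight_nonneg {p q : ℕ × ℕ} {w : ℝ} (h : GPath S A B r c r' c' p q w) :
    0 ≤ w := by
  induction h with
  | refl => exact le_rfl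
  | del h hi hA ih => exact add_nonneg ih (S.del_nonneg _)
  | ins h hj hB ih => exact add_nonneg ih (S.ins_nonneg _)
  | subst h hi hj hA hB ih => exact add_nonneg ih (S.sub_nonneg _ _)

lemma gpath_mono {p q : ℕ × ℕ} {w : ℝ} (h : GPath S A B r c r' c' p q w) :
    p.1 ≤ q.1 ∧ p.2 ≤ q.2 := by
  induction h with
  | refl => exact ⟨le_rfl, le_rfl⟩
  | del h hi hA ih => exact ⟨Nat.le_succ_of_le ih.1, ih.2⟩
  | ins h hj hB ih => exact ⟨ih.1, Nat.le_succ_of_le ih.2⟩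
  | subst h hi hj hA hB ih => exact ⟨Nat.le_succ_of_le ih.1, Nat.le_succ_of_le ih.2⟩

lemma gpath_bounds {p q : ℕ × ℕ} {w : ℝ} (h : GPath S A B r c r' c' p q w) :
    (r ≤ p.1 ∧ p.1 ≤ r' ∧ c ≤ p.2 ∧ p.2 ≤ c') ∧
      (r ≤ q.1 ∧ q.1 ≤ r' ∧ c ≤ q.2 ∧ c' ≥ q.2) := by
  induction h with
  | refl i j hi hj => exact ⟨⟨hi.1, hi.2, hj.1, hj.2⟩, ⟨hi.1, hi.2, hj.1, hj.2⟩⟩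
  | del h hi hA ih => exact ⟨ih.1, by obtain ⟨a1, a2, a3, a4⟩ := ih.2; exact ⟨by omega, by omega, a3, a4⟩⟩
  | ins h hj hB ih => exact ⟨ih.1, by obtain ⟨a1, a2, a3, a4⟩ := ih.2; exact ⟨a1, a2, by omega, by omega⟩⟩
  | subst h hi hj hA hB ih => exact ⟨ih.1, by obtain ⟨a1, a2, a3, a4⟩ := ih.2; exact ⟨by omega, by omega, by omega, by omega⟩⟩

lemma gpath_refl' {q : ℕ × ℕ} (h1 : r ≤ q.1) (h2 : q.1 ≤ r') (h3 : c ≤ q.2) (h4 : q.2 ≤ c') :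
    GPath S A B r c r' c' q q 0 := by
  obtain ⟨x, y⟩ := q
  exact GPath.refl x y ⟨h1, h2⟩ ⟨h3, h4⟩

lemma gpath_trans {p q t : ℕ × ℕ} {w w' : ℝ} (h : GPath S A B r c r' c' p q w)
    (h' : GPath S A B r c r' c' q t w') : GPath S A B r c r' c' p t (w + w') := by
  induction h' with
  | refl i j hi hj => simpa using h
  | del h2 hi hA ih => rw [← add_assoc]; exact GPath.del (ih h) hi hA
  | ins h2 hj hB ih => rw [← add_assoc]; exact GPath.ins (ih h) hj hB
  | subst h2 hi hj hA hB ih => rw [← add_assoc]; exact GPath.subst (ih h) hi hj hA hB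

end Aux

/-- Length-indexed version of `GPath`. -/
inductive GPathN {α : Type*} (S : Scoring α) (A B : List α) (r c r' c' : ℕ) :
    ℕ → ℕ × ℕ → ℕ × ℕ → ℝ → Prop where
  | refl (i j : ℕ) (hi : r ≤ i ∧ i ≤ r') (hj : c ≤ j ∧ j ≤ c') :
      GPathN S A B r c r' c' 0 (i, j) (i, j) 0
  | del {n : ℕ} {p : ℕ × ℕ} {i j : ℕ} {w : ℝ} (h : GPathN S A B r c r' c' n p (i, j) w)
      (hi : i < r') (hA : i < A.length) :
      GPathN S A B r c r' c' (n + 1) p (i + 1, j) (w + S.del (A.get ⟨i, hA⟩))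
  | ins {n : ℕ} {p : ℕ × ℕ} {i j : ℕ} {w : ℝ} (h : GPathN S A B r c r' c' n p (i, j) w)
      (hj : j < c') (hB : j < B.length) :
      GPathN S A B r c r' c' (n + 1) p (i, j + 1) (w + S.ins (B.get ⟨j, hB⟩))
  | subst {n : ℕ} {p : ℕ × ℕ} {i j : ℕ} {w : ℝ} (h : GPathN S A B r c r' c' n p (i, j) w)
      (hi : i < r') (hj : j < c') (hA : i < A.length) (hB : j < B.length) :
      GPathN S A B r c r' c' (n + 1) p (i + 1, j + 1) (w + S.sub (A.get ⟨i, hA⟩) (B.get ⟨j, hB⟩))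

section Aux2

variable {α : Type*} {S : Scoring α} {A B : List α} {r c r' c' : ℕ}

lemma exists_gpathN {p q : ℕ × ℕ} {w : ℝ} (h : GPath S A B r c r' c' p q w) :
    ∃ n, GPathN S A B r c r' c' n p q w := by
  induction h with
  | refl i j hi hj => exact ⟨0, GPathN.refl i j hi hj⟩
  | del h hi hA ih => obtain ⟨n, hn⟩ := ih; exact ⟨n + 1, GPathN.del hn hi hA⟩
  | ins h hj hB ih => obtain ⟨n, hn⟩ := ih; exact ⟨n + 1, GPathN.ins hn hj hB⟩
  | subst h hi hj hA hB ih => obtain ⟨n, hn⟩ := ih; exact ⟨n + 1, GPathN.subst hn hi hj hA hB⟩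

lemma GPathN.toGPath {n : ℕ} {p q : ℕ × ℕ} {w : ℝ} (h : GPathN S A B r c r' c' n p q w) :
    GPath S A B r c r' c' p q w := by
  induction h with
  | refl i j hi hj => exact GPath.refl i j hi hj
  | del h hi hA ih => exact GPath.del ih hi hA
  | ins h hj hB ih => exact GPath.ins ih hj hB
  | subst h hi hj hA hB ih => exact GPath.subst ih hi hj hA hB

/-- The crossing lemma: two monotone paths with "crossing" endpoint configuration share
a vertex, at which they can both be split. -/
lemma crossN : ∀ (N : ℕ) {n1 n2 : ℕ} {s1 t1 s2 t2 : ℕ × ℕ} {w1 w2 : ℝ},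
    n1 + n2 ≤ N →
    GPathN S A B r c r' c' n1 s1 t1 w1 → GPathN S A B r c r' c' n2 s2 t2 w2 →
    s2.1 ≤ s1.1 → s1.2 ≤ s2.2 → t1.1 ≤ t2.1 → t2.2 ≤ t1.2 →
    ∃ v w1a w1b w2a w2b, GPath S A B r c r' c' s1 v w1a ∧ GPath S A B r c r' c' v t1 w1b ∧
      GPath S A B r c r' c' s2 v w2a ∧ GPath S A B r c r' c' v t2 w2b ∧
      w1a + w1b = w1 ∧ w2a + w2b = w2 := by
  intro N
  induction N with
  | zero =>
    intro n1 n2 s1 t1 s2 t2 w1 w2 hN h1 h2 c1 c2 c3 c4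
    obtain rfl : n1 = 0 := by omega
    obtain rfl : n2 = 0 := by omega
    cases h1 with
    | refl i j hi hj =>
      cases h2 with
      | refl i2 j2 hi2 hj2 =>
        have e1 : i = i2 := by simp only [Prod.fst] at c1 c3; omega
        have e2 : j = j2 := by simp only [Prod.snd] at c2 c4; omega
        subst e1; subst e2
        exact ⟨(i, j), 0, 0, 0, 0, GPath.refl i j hi hj, GPath.refl i j hi hj,
          GPath.refl i j hi hj, GPath.refl i j hi hj, by ring, by ring⟩
  | succ N IH =>
    intro n1 n2 s1 t1 s2 t2 w1 w2 hN h1 h2 c1 c2 c3 c4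
    by_cases ht : t1 = t2
    · subst ht
      have hb := (gpath_bounds h1.toGPath).2
      refine ⟨t1, w1, 0, w2, 0, h1.toGPath, gpath_refl' hb.1 hb.2.1 hb.2.2.1 hb.2.2.2,
        h2.toGPath, gpath_refl' hb.1 hb.2.1 hb.2.2.1 hb.2.2.2, by ring, by ring⟩
    · by_cases hcol : t2.2 < t1.2
      · -- peel P1
        cases h1 with
        | refl i j hi hj =>
          have hm := gpath_mono h2.toGPath
          have c2' : j ≤ s2.2 := c2
          have hcol' : t2.2 < j := hcol
          omega
        | @del n p1 i1 j1 w h hi hA =>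
          have c3' : i1 + 1 ≤ t2.1 := c3
          have c4' : t2.2 ≤ j1 := le_of_lt hcol
          obtain ⟨v, w1a, w1b, w2a, w2b, p1', p2', p3', p4', e1, e2⟩ :=
            IH (by omega) h h2 c1 c2 (by omega) c4'
          exact ⟨v, w1a, w1b + S.del (A.get ⟨i1, hA⟩), w2a, w2b, p1',
            GPath.del p2' hi hA, p3', p4', by rw [← add_assoc, e1], e2⟩
        | @ins n p1 i1 j1 w h hj hB =>
          have c3' : i1 ≤ t2.1 := c3
          have c4' : t2.2 ≤ j1 := by
            have : t2.2 < j1 + 1 := hcol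
            omega
          obtain ⟨v, w1a, w1b, w2a, w2b, p1', p2', p3', p4', e1, e2⟩ :=
            IH (by omega) h h2 c1 c2 c3' c4'
          exact ⟨v, w1a, w1b + S.ins (B.get ⟨j1, hB⟩), w2a, w2b, p1',
            GPath.ins p2' hj hB, p3', p4', by rw [← add_assoc, e1], e2⟩
        | @subst n p1 i1 j1 w h hi hj hA hB =>
          have c3' : i1 + 1 ≤ t2.1 := c3
          have c4' : t2.2 ≤ j1 := by
            have : t2.2 < j1 + 1 := hcol
            omega
          obtain ⟨v, w1a, w1b, w2a, w2b, p1', p2', p3', p4', e1, e2⟩ :=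
            IH (by omega) h h2 c1 c2 (by omega) c4'
          exact ⟨v, w1a, w1b + S.sub (A.get ⟨i1, hA⟩) (B.get ⟨j1, hB⟩), w2a, w2b, p1',
            GPath.subst p2' hi hj hA hB, p3', p4', by rw [← add_assoc, e1], e2⟩
      · -- columns equal, rows must differ: peel P2
        have hcol' : t2.2 = t1.2 := le_antisymm c4 (not_lt.1 hcol)
        have hrow : t1.1 < t2.1 := by
          rcases lt_or_eq_of_le c3 with h | h
          · exact h
          · exact absurd (Prod.ext h.symm hcol') (fun e => ht e.symm)
        cases h2 with
        | refl i j hi hj =>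
          have hm := gpath_mono h1.toGPath
          have c1' : i ≤ s1.1 := c1
          have hrow' : t1.1 < i := hrow
          omega
        | @del n p2 i2 j2 w h hi hA =>
          have hrow' : t1.1 < i2 + 1 := hrow
          have hcol2 : j2 ≤ t1.2 := c4
          obtain ⟨v, w1a, w1b, w2a, w2b, p1', p2', p3', p4', e1, e2⟩ :=
            IH (by omega) h1 h c1 c2 (by omega) hcol2
          exact ⟨v, w1a, w1b, w2a, w2b + S.del (A.get ⟨i2, hA⟩), p1', p2', p3',
            GPath.del p4' hi hA, e1, by rw [← add_assoc, e2]⟩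
        | @ins n p2 i2 j2 w h hj hB =>
          have hrow' : t1.1 < i2 := hrow
          have hcol2 : j2 ≤ t1.2 := by
            have : j2 + 1 ≤ t1.2 := c4
            omega
          obtain ⟨v, w1a, w1b, w2a, w2b, p1', p2', p3', p4', e1, e2⟩ :=
            IH (by omega) h1 h c1 c2 (by omega) hcol2
          exact ⟨v, w1a, w1b, w2a, w2b + S.ins (B.get ⟨j2, hB⟩), p1', p2', p3',
            GPath.ins p4' hj hB, e1, by rw [← add_assoc, e2]⟩
        | @subst n p2 i2 j2 w h hi hj hA hB =>
          have hrow' : t1.1 < i2 + 1 := hrow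
          have hcol2 : j2 ≤ t1.2 := by
            have : j2 + 1 ≤ t1.2 := c4
            omega
          obtain ⟨v, w1a, w1b, w2a, w2b, p1', p2', p3', p4', e1, e2⟩ :=
            IH (by omega) h1 h c1 c2 (by omega) hcol2
          exact ⟨v, w1a, w1b, w2a, w2b + S.sub (A.get ⟨i2, hA⟩) (B.get ⟨j2, hB⟩), p1', p2', p3',
            GPath.subst p4' hi hj hA hB, e1, by rw [← add_assoc, e2]⟩

end Aux2

section Aux3

variable {α : Type*} {S : Scoring α} {A B : List α} {r c r' c' : ℕ}

lemma minWeight_le {p q : ℕ × ℕ} {w : ℝ} (h : GPath S A B r c r' c' p q w) :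
    minWeight S A B r c r' c' p q ≤ (w : EReal) :=
  sInf_le ⟨w, h, rfl⟩

lemma minWeight_ne_top {p q : ℕ × ℕ} {w : ℝ} (h : GPath S A B r c r' c' p q w) :
    minWeight S A B r c r' c' p q ≠ ⊤ := by
  intro h'
  have := minWeight_le h
  rw [h'] at this
  exact absurd this (by simp)

lemma minWeight_nonneg (p q : ℕ × ℕ) : (0 : EReal) ≤ minWeight S A B r c r' c' p q := by
  apply le_sInf
  rintro x ⟨w, hw, rfl⟩
  show (0 : EReal) ≤ (w : EReal)
  exact_mod_cast gpath_weight_nonneg hw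

lemma exists_gpath_of_ne_top {p q : ℕ × ℕ} (h : minWeight S A B r c r' c' p q ≠ ⊤) :
    ∃ w, GPath S A B r c r' c' p q w := by
  by_contra hn
  push_neg at hn
  apply h
  unfold minWeight
  have he : {w : ℝ | GPath S A B r c r' c' p q w} = ∅ := by
    ext w; simp [hn w]
  rw [he]
  simp

lemma exists_gpath_lt {p q : ℕ × ℕ} {x : EReal} (hx : minWeight S A B r c r' c' p q < x) :
    ∃ w, GPath S A B r c r' c' p q w ∧ (w : EReal) < x := by
  obtain ⟨y, hy, hlt⟩ := sInf_lt_iff.mp hx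
  obtain ⟨w, hw, rfl⟩ := hy
  exact ⟨w, hw, hlt⟩

lemma inputVtx_mono {i i' : ℕ} (hr : r ≤ r') (h : i ≤ i') :
    (inputVtx r c r' c' i').1 ≤ (inputVtx r c r' c' i).1 ∧
      (inputVtx r c r' c' i).2 ≤ (inputVtx r c r' c' i').2 := by
  unfold inputVtx
  split <;> split <;> constructor <;> simp <;> omega

lemma outputVtx_mono {j j' : ℕ} (hc : c ≤ c') (h : j ≤ j') :
    (outputVtx r c r' c' j').1 ≤ (outputVtx r c r' c' j).1 ∧
      (outputVtx r c r' c' j).2 ≤ (outputVtx r c r' c' j').2 := by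
  unfold outputVtx
  split <;> split <;> constructor <;> simp <;> omega

lemma ereal_le_of_forall {z : EReal} {x : ℝ} (h : ∀ ε : ℝ, 0 < ε → z ≤ ↑(x + ε)) :
    z ≤ (x : EReal) := by
  have hnt : z ≠ ⊤ := by
    intro he
    have := h 1 one_pos
    rw [he, top_le_iff] at this
    exact EReal.coe_ne_top _ this
  rcases eq_or_ne z ⊥ with hb | hb
  · rw [hb]; exact bot_le
  · rw [← EReal.coe_toReal hnt hb] at h ⊢
    rw [EReal.coe_le_coe_iff]
    apply le_of_forall_pos_le_add
    intro ε hε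
    have := h ε hε
    exact_mod_cast this

end Aux3

/-- The `DIST` table of a block of an alignment grid with a nonnegative scoring
function satisfies the inverse Monge condition on its finite entries: for input indices
`i ≤ i'` and output indices `j ≤ j'`, if `DIST[i,j']` and `DIST[i',j]` are finite, then
`DIST[i,j]` and `DIST[i',j']` are finite and
`DIST[i,j] + DIST[i',j'] ≤ DIST[i,j'] + DIST[i',j]`. -/
theorem DIST_inverse_monge {α : Type*} (S : Scoring α) (A B : List α)
    (r c r' c' : ℕ) (hr : r ≤ r') (hc : c ≤ c')
    (hr' : r' ≤ A.length) (hc' : c' ≤ B.length)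
    (i i' j j' : ℕ) (hii' : i ≤ i') (hjj' : j ≤ j')
    (hi' : i' < (r' - r) + (c' - c) + 1) (hj' : j' < (r' - r) + (c' - c) + 1)
    (hfin1 : DISTfun S A B r c r' c' i j' ≠ ⊤)
    (hfin2 : DISTfun S A B r c r' c' i' j ≠ ⊤) :
    DISTfun S A B r c r' c' i j ≠ ⊤ ∧ DISTfun S A B r c r' c' i' j' ≠ ⊤ ∧
    DISTfun S A B r c r' c' i j + DISTfun S A B r c r' c' i' j' ≤
      DISTfun S A B r c r' c' i j' + DISTfun S A B r c r' c' i' j := by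
  unfold DISTfun at *
  have cross_any : ∀ {x1 x2 : ℝ},
      GPath S A B r c r' c' (inputVtx r c r' c' i) (outputVtx r c r' c' j') x1 →
      GPath S A B r c r' c' (inputVtx r c r' c' i') (outputVtx r c r' c' j) x2 →
      ∃ y1 y2, GPath S A B r c r' c' (inputVtx r c r' c' i) (outputVtx r c r' c' j) y1 ∧
        GPath S A B r c r' c' (inputVtx r c r' c' i') (outputVtx r c r' c' j') y2 ∧
        y1 + y2 = x1 + x2 := by
    intro x1 x2 h1 h2
    obtain ⟨n1, h1'⟩ := exists_gpathN h1
    obtain ⟨n2, h2'⟩ := exists_gpathN h2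
    obtain ⟨v, w1a, w1b, w2a, w2b, p1, p2, p3, p4, e1, e2⟩ :=
      crossN (n1 + n2) le_rfl h1' h2' (inputVtx_mono hr hii').1 (inputVtx_mono hr hii').2
        (outputVtx_mono hc hjj').1 (outputVtx_mono hc hjj').2
    exact ⟨w1a + w2b, w2a + w1b, gpath_trans p1 p4, gpath_trans p3 p2, by linarith⟩
  obtain ⟨u1, hu1⟩ := exists_gpath_of_ne_top hfin1
  obtain ⟨u2, hu2⟩ := exists_gpath_of_ne_top hfin2
  obtain ⟨y1, y2, hy1, hy2, _⟩ := cross_any hu1 hu2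
  refine ⟨minWeight_ne_top hy1, minWeight_ne_top hy2, ?_⟩
  set d1 := minWeight S A B r c r' c' (inputVtx r c r' c' i) (outputVtx r c r' c' j') with hd1
  set d2 := minWeight S A B r c r' c' (inputVtx r c r' c' i') (outputVtx r c r' c' j) with hd2
  have hb1 : d1 ≠ ⊥ := ne_bot_of_le_ne_bot (by simp) (minWeight_nonneg _ _)
  have hb2 : d2 ≠ ⊥ := ne_bot_of_le_ne_bot (by simp) (minWeight_nonneg _ _)
  rw [← EReal.coe_toReal hfin1 hb1, ← EReal.coe_toReal hfin2 hb2, ← EReal.coe_add]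
  apply ereal_le_of_forall
  intro ε hε
  have hlt1 : d1 < ((d1.toReal + ε / 2 : ℝ) : EReal) := by
    nth_rewrite 1 [← EReal.coe_toReal hfin1 hb1]
    exact_mod_cast (by linarith : d1.toReal < d1.toReal + ε / 2)
  have hlt2 : d2 < ((d2.toReal + ε / 2 : ℝ) : EReal) := by
    nth_rewrite 1 [← EReal.coe_toReal hfin2 hb2]
    exact_mod_cast (by linarith : d2.toReal < d2.toReal + ε / 2)
  obtain ⟨x1, hx1, hx1'⟩ := exists_gpath_lt hlt1
  obtain ⟨x2, hx2, hx2'⟩ := exists_gpath_lt hlt2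
  have hx1r : x1 < d1.toReal + ε / 2 := by exact_mod_cast hx1'
  have hx2r : x2 < d2.toReal + ε / 2 := by exact_mod_cast hx2'
  obtain ⟨z1, z2, hz1, hz2, hsum⟩ := cross_any hx1 hx2
  calc minWeight S A B r c r' c' (inputVtx r c r' c' i) (outputVtx r c r' c' j) +
        minWeight S A B r c r' c' (inputVtx r c r' c' i') (outputVtx r c r' c' j')
      ≤ (z1 : EReal) + (z2 : EReal) := add_le_add (minWeight_le hz1) (minWeight_le hz2)
    _ = ((z1 + z2 : ℝ) : EReal) := (EReal.coe_add _ _).symm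
    _ ≤ ((d1.toReal + d2.toReal + ε : ℝ) : EReal) := by
        exact_mod_cast (by linarith : z1 + z2 ≤ d1.toReal + d2.toReal + ε)
end
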